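/- Let g ∈ S_m have cycles c_1,…,c_r and h ∈ S_n. Then Δ(g,h) := n·ind(g) + m·ind(h) − ind(g,h) equals m·ind(h) if and only if ord(h) divides |c_i| for every cycle c_i of g. -/

import Mathlib

/-- The multiset of all cycle lengths of a permutation, counting fixed points as 1-cycles. -/
def fullCycleType {α : Type*} [Fintype α] [DecidableEq α] (σ : Equiv.Perm α) : Multiset ℕ :=
  σ.cycleType + Multiset.replicate (Fintype.card α - σ.support.card) 1

/-- The number of cycles of a permutation (fixed points counted as 1-cycles),
i.e. the number of orbits of the cyclic group it generates. -/
def cycleCount {α : Type*} [Fintype α] [DecidableEq α] (σ : Equiv.Perm α) : ℕ :=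
  Multiset.card (fullCycleType σ)

/-- `ind σ = N - (number of cycles of σ)` for `σ` a permutation of a set of size `N`. -/
def ind {α : Type*} [Fintype α] [DecidableEq α] (σ : Equiv.Perm α) : ℕ :=
  Fintype.card α - cycleCount σ

/-!
Write `p_σ(x) = MulAction.period σ x` for the length of the cycle of `σ` through `x`. Every
cycle of length `ℓ` contributes `ℓ` points of weight `1/ℓ`, so `cycleCount σ = ∑ₓ 1/p_σ(x)`.
The cycle of `(g,h)` through `(x,y)` has length `lcm(p_g(x), p_h(y)) ≥ p_g(x)`, hence
`cycleCount (g,h) ≤ n · cycleCount g`, with equality iff `p_h(y) ∣ p_g(x)` for all `x, y`,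
i.e. iff `ord h = lcm_y p_h(y)` divides every cycle length of `g`. Unfolding `ind`, the
equation `Δ(g,h) = m · ind h` says exactly `cycleCount (g,h) = n · cycleCount g`.
-/

open Finset MulAction

namespace Equiv.Perm

variable {α β : Type*}

lemma period_prodCongr (g : Perm α) (h : Perm β) (z : α × β) :
    period (g.prodCongr h) z = (period g z.1).lcm (period h z.2) :=
  Function.minimalPeriod_prodMap _ _ z

lemma forall_period_dvd_iff_orderOf_dvd (σ : Perm α) (k : ℕ) :
    (∀ x : α, period σ x ∣ k) ↔ orderOf σ ∣ k := by
  rw [orderOf_dvd_iff_pow_eq_one, Perm.ext_iff]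
  exact forall_congr' fun _ => pow_smul_eq_iff_period_dvd.symm

variable [Fintype α] [DecidableEq α] [Fintype β] [DecidableEq β]

lemma period_eq_one_of_notMem_support {σ : Perm α} {x : α} (hx : x ∉ σ.support) :
    period σ x = 1 :=
  period_eq_one_iff.mpr (notMem_support.mp hx)

lemma period_eq_card_support_cycleOf {σ : Perm α} {x : α} (hx : x ∈ σ.support) :
    period σ x = #(σ.cycleOf x).support := by
  have hx' : x ∈ (σ.cycleOf x).support := mem_support_cycleOf_iff.mpr ⟨SameCycle.refl _ _, hx⟩
  have hdvd : ∀ k, period σ x ∣ k ↔ #(σ.cycleOf x).support ∣ k := fun k =>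
    pow_smul_eq_iff_period_dvd.symm.trans ((isCycleOn_support_cycleOf σ x).pow_apply_eq hx')
  exact Nat.dvd_antisymm ((hdvd _).mpr dvd_rfl) ((hdvd _).mp dvd_rfl)

lemma mem_fullCycleType_iff {σ : Perm α} {c : ℕ} :
    c ∈ fullCycleType σ ↔ ∃ x : α, period σ x = c := by
  rw [fullCycleType, Multiset.mem_add, cycleType_def, Multiset.mem_map, Multiset.mem_replicate,
    ← card_compl, card_ne_zero]
  constructor
  · rintro (⟨τ, hτ, rfl⟩ | ⟨⟨x, hx⟩, rfl⟩)
    · obtain ⟨x, hx⟩ := (mem_cycleFactorsFinset_iff.mp hτ).1.nonempty_support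
      refine ⟨x, ?_⟩
      rw [period_eq_card_support_cycleOf (mem_cycleFactorsFinset_support_le hτ hx),
        ← cycle_is_cycleOf hx hτ]
      rfl
    · exact ⟨x, period_eq_one_of_notMem_support (mem_compl.mp hx)⟩
  · rintro ⟨x, rfl⟩
    by_cases hx : x ∈ σ.support
    · exact .inl ⟨σ.cycleOf x, cycleOf_mem_cycleFactorsFinset_iff.mpr hx,
        (period_eq_card_support_cycleOf hx).symm⟩
    · exact .inr ⟨⟨x, mem_compl.mpr hx⟩, period_eq_one_of_notMem_support hx⟩

lemma cycleCount_le_card (σ : Perm α) : cycleCount σ ≤ Fintype.card α := by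
  have := Multiset.card_nsmul_le_sum (a := 1) fun _ hc => σ.partition.parts_pos hc
  rwa [smul_eq_mul, mul_one, σ.partition.parts_sum] at this

lemma natCast_ind (σ : Perm α) : (ind σ : ℤ) = Fintype.card α - cycleCount σ :=
  Nat.cast_sub (cycleCount_le_card σ)

lemma filter_cycleOf_eq {σ c : Perm α} (hc : c ∈ σ.cycleFactorsFinset) :
    {x ∈ σ.support | σ.cycleOf x = c} = c.support := by
  ext x
  rw [mem_filter]
  constructor
  · rintro ⟨hx, rfl⟩
    exact mem_support_cycleOf_iff.mpr ⟨SameCycle.refl _ _, hx⟩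
  · intro hx
    exact ⟨mem_cycleFactorsFinset_support_le hc hx, (cycle_is_cycleOf hx hc).symm⟩

lemma sum_support_inv_period (K : Type*) [DivisionRing K] [CharZero K] (σ : Perm α) :
    ∑ x ∈ σ.support, (period σ x : K)⁻¹ = #σ.cycleFactorsFinset := by
  rw [← sum_fiberwise_of_maps_to (g := σ.cycleOf) fun x hx =>
    cycleOf_mem_cycleFactorsFinset_iff.mpr hx, card_eq_sum_ones, Nat.cast_sum]
  refine sum_congr rfl fun c hc => ?_
  have hperiod : ∀ x ∈ {x ∈ σ.support | σ.cycleOf x = c},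
      (period σ x : K)⁻¹ = (#c.support : K)⁻¹ := fun x hx => by
      rw [mem_filter] at hx
      rw [period_eq_card_support_cycleOf hx.1, hx.2]
  have hpos : #c.support ≠ 0 :=
    card_ne_zero.mpr (mem_cycleFactorsFinset_iff.mp hc).1.nonempty_support
  rw [sum_congr rfl hperiod, filter_cycleOf_eq hc, sum_const, nsmul_eq_mul,
    mul_inv_cancel₀ (Nat.cast_ne_zero.mpr hpos), Nat.cast_one]

lemma cycleCount_eq_sum_inv_period (K : Type*) [DivisionRing K] [CharZero K] (σ : Perm α) :
    (cycleCount σ : K) = ∑ x : α, (period σ x : K)⁻¹ := by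
  have hfixed : ∑ x ∈ σ.supportᶜ, (period σ x : K)⁻¹ = #σ.supportᶜ := by
    rw [card_eq_sum_ones, Nat.cast_sum]
    refine sum_congr rfl fun x hx => ?_
    rw [period_eq_one_of_notMem_support (mem_compl.mp hx), Nat.cast_one, inv_one]
  rw [← sum_add_sum_compl σ.support, sum_support_inv_period, hfixed, card_compl, cycleCount,
    fullCycleType, Multiset.card_add, Multiset.card_replicate, cycleType_def, Multiset.card_map,
    ← card_def, Nat.cast_add]

lemma cycleCount_prodCongr_eq_iff (g : Perm α) (h : Perm β) :
    cycleCount (g.prodCongr h) = Fintype.card β * cycleCount g ↔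
      ∀ (x : α) (y : β), period h y ∣ period g x := by
  have hterm : ∀ z : α × β, (period (g.prodCongr h) z : ℚ)⁻¹ ≤ (period g z.1 : ℚ)⁻¹ := by
    intro z
    have hg := period_pos_of_orderOf_pos (orderOf_pos g) z.1
    have hh := period_pos_of_orderOf_pos (orderOf_pos h) z.2
    rw [period_prodCongr]
    gcongr
    exact Nat.le_of_dvd (Nat.lcm_pos hg hh) (Nat.dvd_lcm_left _ _)
  have hsum : ((Fintype.card β * cycleCount g : ℕ) : ℚ) = ∑ z : α × β, (period g z.1 : ℚ)⁻¹ := by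
    rw [Fintype.sum_prod_type, Nat.cast_mul, cycleCount_eq_sum_inv_period, mul_sum]
    simp
  rw [← Nat.cast_inj (R := ℚ), cycleCount_eq_sum_inv_period, hsum,
    sum_eq_sum_iff_of_le fun z _ => hterm z]
  simp only [mem_univ, true_implies, inv_inj, Nat.cast_inj, period_prodCongr,
    Nat.lcm_eq_left_iff_dvd, Prod.forall]

end Equiv.Perm

open Equiv.Perm

theorem stmt_6 {m n : ℕ} (g : Equiv.Perm (Fin m)) (h : Equiv.Perm (Fin n)) :
    (n : ℤ) * ind g + (m : ℤ) * ind h - ind (g.prodCongr h) = (m : ℤ) * ind h ↔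
    ∀ c ∈ fullCycleType g, orderOf h ∣ c := by
  have hcount := cycleCount_prodCongr_eq_iff g h
  rw [Fintype.card_fin] at hcount
  have hind : (n : ℤ) * ind g + (m : ℤ) * ind h - ind (g.prodCongr h) = (m : ℤ) * ind h ↔
      cycleCount (g.prodCongr h) = n * cycleCount g := by
    simp only [natCast_ind, Fintype.card_prod, Fintype.card_fin, Nat.cast_mul]
    constructor <;> intro H
    · exact_mod_cast (by linarith : (cycleCount (g.prodCongr h) : ℤ) = n * cycleCount g)
    · rw [H]
      push_cast
      ring
  simp only [hind, hcount, forall_period_dvd_iff_orderOf_dvd,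
    mem_fullCycleType_iff, forall_exists_index, forall_apply_eq_imp_iff]
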